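/- The GOU transition kernels satisfy the Chapman–Kolmogorov property: for all σ > 0, a > 0, b > 0 and μ, x₀ ∈ ℝ, the measure obtained by first sampling y from the Gaussian measure on ℝ with mean μ + (x₀ − μ)·exp(−a) and variance σ²(1 − exp(−2a)), and then sampling from the Gaussian measure with mean μ + (y − μ)·exp(−b) and variance σ²(1 − exp(−2b)) (i.e., the monadic bind of the first measure with the second kernel), equals the Gaussian measure with mean μ + (x₀ − μ)·exp(−(a+b)) and variance σ²(1 − exp(−2(a+b))). -/

import Mathlib

/-!
Writing the second transition as `y ↦ δ_{e^{-b} y + μ(1 - e^{-b})} ∗ N(0, v_b)` turns the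
composite kernel into the convolution of the affine image of the first Gaussian with `N(0, v_b)`.
Affine images and convolutions of Gaussians are Gaussian, and the variances combine as
`e^{-2b} σ²(1 - e^{-2a}) + σ²(1 - e^{-2b}) = σ²(1 - e^{-2(a+b)})`.
-/

open MeasureTheory ProbabilityTheory
open scoped NNReal

namespace MeasureTheory.Measure

variable {α G : Type*} [MeasurableSpace α] [AddMonoid G] [MeasurableSpace G] [MeasurableAdd₂ G]

lemma bind_map_const_add_eq_conv (m : Measure α) (ν : Measure G) [SFinite ν] {f : α → G}
    (hf : Measurable f) :
    m.bind (fun a => ν.map (f a + ·)) = m.map f ∗ ν := by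
  have hκ : Measurable fun a => ν.map (f a + ·) := measurable_of_measurable_coe _ fun t ht => by
    simp_rw [map_apply (measurable_const_add _) ht]
    exact (measurable_measure_prodMk_left (measurable_add ht)).comp hf
  ext s hs
  have hadd : MeasurableSet ((fun p : G × G => p.1 + p.2) ⁻¹' s) := measurable_add hs
  unfold conv
  rw [bind_apply hs hκ.aemeasurable, map_apply measurable_add hs, prod_apply hadd,
    lintegral_map (measurable_measure_prodMk_left hadd) hf]
  exact lintegral_congr fun a => map_apply (measurable_const_add _) hs

end MeasureTheory.Measure

namespace ProbabilityTheory

lemma gaussianReal_map_affine (m c d : ℝ) (v : ℝ≥0) :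
    (gaussianReal m v).map (fun y => c * y + d)
      = gaussianReal (c * m + d) (.mk (c ^ 2) (sq_nonneg c) * v) := by
  rw [← gaussianReal_map_add_const, ← gaussianReal_map_const_mul,
    Measure.map_map (measurable_add_const d) (measurable_const_mul c)]
  rfl

lemma gaussianReal_bind_affine (m c d : ℝ) (v₁ v₂ : ℝ≥0) :
    (gaussianReal m v₁).bind (fun y => gaussianReal (c * y + d) v₂)
      = gaussianReal (c * m + d) (.mk (c ^ 2) (sq_nonneg c) * v₁ + v₂) := by
  have hkernel : (fun y => gaussianReal (c * y + d) v₂)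
      = fun y => (gaussianReal 0 v₂).map ((c * y + d) + ·) := by
    simp_rw [gaussianReal_map_const_add, zero_add]
  rw [hkernel, Measure.bind_map_const_add_eq_conv _ _ (by fun_prop), gaussianReal_map_affine,
    gaussianReal_conv_gaussianReal, add_zero]

end ProbabilityTheory

theorem gou_chapman_kolmogorov_general (σ a b μ x₀ : ℝ) (ha : 0 < a)
    (hb : 0 < b) :
    (gaussianReal (μ + (x₀ - μ) * Real.exp (-a))
        (Real.toNNReal (σ ^ 2 * (1 - Real.exp (-2 * a))))).bind
      (fun y => gaussianReal (μ + (y - μ) * Real.exp (-b))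
        (Real.toNNReal (σ ^ 2 * (1 - Real.exp (-2 * b)))))
    = gaussianReal (μ + (x₀ - μ) * Real.exp (-(a + b)))
        (Real.toNNReal (σ ^ 2 * (1 - Real.exp (-2 * (a + b))))) := by
  have hmean : ∀ y, μ + (y - μ) * Real.exp (-b) = Real.exp (-b) * y + μ * (1 - Real.exp (-b)) :=
    fun y => by ring
  have hvar_nonneg : ∀ t, 0 ≤ t → 0 ≤ σ ^ 2 * (1 - Real.exp (-2 * t)) := fun t ht =>
    mul_nonneg (sq_nonneg σ) (sub_nonneg.2 (Real.exp_le_one_iff.2 (by linarith)))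
  have hexp_sq : Real.exp (-b) ^ 2 = Real.exp (-2 * b) := by
    rw [← Real.exp_nat_mul]; ring_nf
  simp_rw [hmean, gaussianReal_bind_affine]
  congr 1
  · rw [neg_add, Real.exp_add]; ring
  · apply NNReal.eq
    simp only [NNReal.coe_add, NNReal.coe_mul, NNReal.coe_mk,
      Real.coe_toNNReal _ (hvar_nonneg _ ha.le), Real.coe_toNNReal _ (hvar_nonneg _ hb.le),
      Real.coe_toNNReal _ (hvar_nonneg _ (add_pos ha hb).le)]
    rw [hexp_sq, mul_add, Real.exp_add]
    ring

/-- Chapman–Kolmogorov property of the GOU transition kernels: composing the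
GOU transition over accumulated mean-reversion time `a` with the GOU transition
over time `b` gives the GOU transition over time `a + b`. -/
theorem gou_chapman_kolmogorov (σ a b μ x₀ : ℝ) (hσ : 0 < σ) (ha : 0 < a)
    (hb : 0 < b) :
    (gaussianReal (μ + (x₀ - μ) * Real.exp (-a))
        (Real.toNNReal (σ ^ 2 * (1 - Real.exp (-2 * a))))).bind
      (fun y => gaussianReal (μ + (y - μ) * Real.exp (-b))
        (Real.toNNReal (σ ^ 2 * (1 - Real.exp (-2 * b)))))
    = gaussianReal (μ + (x₀ - μ) * Real.exp (-(a + b)))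
        (Real.toNNReal (σ ^ 2 * (1 - Real.exp (-2 * (a + b))))) :=
  gou_chapman_kolmogorov_general σ a b μ x₀ ha hb
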